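/- In an alternative ring, if v_i and v_j are two elements satisfying v_i v_j + v_j v_i = 0, then for every element a it holds v_i(v_j(v_i a)) = (v_i v_j v_i) a; in particular if additionally v_i^2 = -1 then v_i(v_j(v_i a)) = v_j a. -/

import Mathlib

/-!
All associator identities below follow from the Teichmüller identity `associator_cocycle`,
valid in any non-associative ring. Linearizing the left and right alternative laws makes the
associator alternating (in particular the ring is flexible); feeding this into the Teichmüller
identity at `(x, y, x, z)` gives the left Moufang identity `x (y (x z)) = ((x y) x) z`.
When `v w = - w v` and `v v = -1`, flexibility gives
`(v w) v = v (w v) = - v (v w) = - (v v) w = w`.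
-/

section Alternative

variable {R : Type*} [NonUnitalNonAssocRing R]

theorem associator_self_left (hLA : ∀ x y : R, x * x * y = x * (x * y)) (x y : R) :
    associator x x y = 0 := by
  rw [associator_apply, hLA, sub_self]

theorem associator_self_right (hRA : ∀ x y : R, x * y * y = x * (y * y)) (x y : R) :
    associator x y y = 0 := by
  rw [associator_apply, hRA, sub_self]

theorem associator_swap_left (hLA : ∀ x y : R, x * x * y = x * (x * y)) (x y z : R) :
    associator y x z = -associator x y z := by
  have h := associator_self_left hLA (x + y) z
  simp only [associator_apply, add_mul, mul_add] at h ⊢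
  linear_combination (norm := abel) h - hLA x z - hLA y z

theorem associator_swap_right (hRA : ∀ x y : R, x * y * y = x * (y * y)) (x y z : R) :
    associator x z y = -associator x y z := by
  have h := associator_self_right hRA x (y + z)
  simp only [associator_apply, add_mul, mul_add] at h ⊢
  linear_combination (norm := abel) h - hRA x y - hRA x z

theorem associator_self_middle (hLA : ∀ x y : R, x * x * y = x * (x * y))
    (hRA : ∀ x y : R, x * y * y = x * (y * y)) (x y : R) :
    associator x y x = 0 := by
  rw [associator_swap_left hLA, associator_swap_right hRA, associator_self_right hRA,
    neg_zero, neg_zero]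

theorem associator_third_mul_left (hLA : ∀ x y : R, x * x * y = x * (x * y))
    (hRA : ∀ x y : R, x * y * y = x * (y * y)) (x y z : R) :
    associator x y (x * z) = associator (x * x) y z - x * associator x y z := by
  have h := associator_cocycle x x z y
  rw [associator_self_left hLA, associator_self_left hLA, zero_mul, add_zero,
    associator_swap_right hRA (x * x) y z, associator_swap_right hRA x y (x * z),
    associator_swap_right hRA x y z, mul_neg] at h
  linear_combination (norm := abel) -h

theorem associator_first_mul_right (hLA : ∀ x y : R, x * x * y = x * (x * y))
    (hRA : ∀ x y : R, x * y * y = x * (y * y)) (x y z : R) :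
    associator (y * x) x z = -(x * associator x y z) := by
  have h := associator_cocycle y x x z
  rw [associator_self_left hLA, associator_self_right hRA, mul_zero, zero_mul, add_zero,
    associator_swap_left hLA (x * x) y z, associator_swap_left hLA x y (x * z),
    associator_third_mul_left hLA hRA] at h
  linear_combination (norm := abel) -h

theorem left_moufang (hLA : ∀ x y : R, x * x * y = x * (x * y))
    (hRA : ∀ x y : R, x * y * y = x * (y * y)) (x y z : R) :
    x * (y * (x * z)) = x * y * x * z := by
  have h := associator_cocycle x y x z
  rw [associator_self_middle hLA hRA, zero_mul, add_zero,
    associator_swap_left hLA (y * x) x z, associator_first_mul_right hLA hRA,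
    associator_swap_left hLA x y z, mul_neg] at h
  simp only [associator_apply] at h
  linear_combination (norm := abel) h

end Alternative

theorem alternative_vwv_assoc {R : Type*} [NonAssocRing R]
    (hLA : ∀ x y : R, x * x * y = x * (x * y))
    (hRA : ∀ x y : R, x * y * y = x * (y * y))
    (v w : R) (hanti : v * w + w * v = 0) :
    (∀ a : R, v * (w * (v * a)) = ((v * w) * v) * a) ∧
    (v * v = -1 → ∀ a : R, v * (w * (v * a)) = w * a) := by
  refine ⟨left_moufang hLA hRA v w, fun hv a => ?_⟩
  have hwv : w * v = -(v * w) := eq_neg_of_add_eq_zero_right hanti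
  have hvwv : v * w * v = w := by
    rw [sub_eq_zero.mp (associator_self_middle hLA hRA v w), hwv, mul_neg, ← hLA, hv,
      neg_one_mul, neg_neg]
  rw [left_moufang hLA hRA, hvwv]
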